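/- Let a ∈ ℝⁿ \ {0}, b_m < b_M be reals, γ > 0, μ > 0, and let B(u) = −ln(b_M − aᵀu) − ln(aᵀu − b_m) if b_m < aᵀu < b_M and B(u) = +∞ otherwise. Then for every x ∈ ℝⁿ, the unique minimizer over u ∈ ℝⁿ of (1/2)‖x − u‖² + γμ B(u) is φ(x, μ, γ) = x + ((κ(x, μ, γ) − aᵀx)/‖a‖²) a, where κ(x, μ, γ) is the unique solution in (b_m, b_M) of the cubic equation z³ − (b_m + b_M + aᵀx) z² + (b_m b_M + aᵀx (b_m + b_M) − 2γμ‖a‖²) z − b_m b_M aᵀx + γμ (b_m + b_M)‖a‖² = 0. -/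

import Mathlib

/-!
The objective `u ↦ ½‖x - u‖² + γμ B(u)` is `1`-strongly convex, so at the point
`p = x + ((κ - ⟪a, x⟫) / ‖a‖²) a` where its gradient vanishes it satisfies
`F(u) ≥ F(p) + ½‖u - p‖²`. Concretely, `½‖x - u‖² = ½‖x - p‖² + ⟪p - x, u - p⟫ + ½‖u - p‖²`,
the middle term is `(κ - ⟪a, x⟫)/‖a‖² · (⟪a, u⟫ - κ)`, and the tangent-line bound for the convex
one-dimensional barrier `s ↦ -log (b_M - s) - log (s - b_m)` at `κ` cancels it: the cubic
equation for `κ` is precisely the vanishing of the derivative of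
`s ↦ (s - ⟪a, x⟫)² / (2‖a‖²) + γμ (-log (b_M - s) - log (s - b_m))`.
-/

open scoped InnerProductSpace

/-- Logarithmic barrier of the hyperslab `{u : bm ≤ ⟪a,u⟫ ≤ bM}`. -/
noncomputable def hyperslabBarrier {n : ℕ} (a : EuclideanSpace ℝ (Fin n)) (bm bM : ℝ)
    (u : EuclideanSpace ℝ (Fin n)) : EReal :=
  if bm < ⟪a, u⟫_ℝ ∧ ⟪a, u⟫_ℝ < bM then
    ((- Real.log (bM - ⟪a, u⟫_ℝ) - Real.log (⟪a, u⟫_ℝ - bm) : ℝ) : EReal)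
  else ⊤

/-- The objective `u ↦ (1/2)‖x-u‖² + γμ B(u)` defining `prox_{γμB}(x)`. -/
noncomputable def hyperslabProxObj {n : ℕ} (a : EuclideanSpace ℝ (Fin n)) (bm bM γ μ : ℝ)
    (x u : EuclideanSpace ℝ (Fin n)) : EReal :=
  ((1 / 2 * ‖x - u‖ ^ 2 : ℝ) : EReal) + ((γ * μ : ℝ) : EReal) * hyperslabBarrier a bm bM u

open Real

theorem log_le_log_add_sub_div {p y : ℝ} (hp : 0 < p) (hy : 0 < y) :
    log y ≤ log p + (y - p) / p := by
  have h := log_le_sub_one_of_pos (div_pos hy hp)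
  rw [log_div hy.ne' hp.ne'] at h
  rw [sub_div, div_self hp.ne']
  linarith

noncomputable def slabLogBarrier (bm bM s : ℝ) : ℝ :=
  -log (bM - s) - log (s - bm)

theorem slabLogBarrier_add_mul_deriv_le {bm bM z s : ℝ} (hz : z ∈ Set.Ioo bm bM)
    (hs : s ∈ Set.Ioo bm bM) :
    slabLogBarrier bm bM z + (s - z) * (1 / (bM - z) - 1 / (z - bm)) ≤
      slabLogBarrier bm bM s := by
  have hM := log_le_log_add_sub_div (sub_pos.2 hz.2) (sub_pos.2 hs.2)
  have hm := log_le_log_add_sub_div (sub_pos.2 hz.1) (sub_pos.2 hs.1)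
  unfold slabLogBarrier
  linear_combination hM + hm

/-- The cubic is `-N (bM - z) (z - bm)` times the left-hand side of the conclusion. -/
theorem cubic_root_stationary {bm bM t N γ μ z : ℝ} (hN : N ≠ 0) (hz : z ∈ Set.Ioo bm bM)
    (hcubic : z ^ 3 - (bm + bM + t) * z ^ 2 + (bm * bM + t * (bm + bM) - 2 * γ * μ * N) * z -
      bm * bM * t + γ * μ * (bm + bM) * N = 0) :
    (z - t) / N + γ * μ * (1 / (bM - z) - 1 / (z - bm)) = 0 := by
  have hM : bM - z ≠ 0 := (sub_pos.2 hz.2).ne'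
  have hm : z - bm ≠ 0 := (sub_pos.2 hz.1).ne'
  field_simp
  linear_combination -hcubic

section InnerProductSpace

variable {E : Type*} [NormedAddCommGroup E] [InnerProductSpace ℝ E]

theorem inner_add_smul_div_norm_sq {a : E} (ha : a ≠ 0) (x : E) (z : ℝ) :
    ⟪a, x + ((z - ⟪a, x⟫_ℝ) / ‖a‖ ^ 2) • a⟫_ℝ = z := by
  have hN : ‖a‖ ^ 2 ≠ 0 := pow_ne_zero 2 (norm_ne_zero_iff.2 ha)
  rw [inner_add_right, real_inner_smul_right, real_inner_self_eq_norm_sq]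
  field_simp
  ring

theorem half_norm_sub_sq_add_slabLogBarrier_ge {a x p u : E} {k c bm bM : ℝ} (hc : 0 ≤ c)
    (hpx : p - x = k • a) (hp : ⟪a, p⟫_ℝ ∈ Set.Ioo bm bM) (hu : ⟪a, u⟫_ℝ ∈ Set.Ioo bm bM)
    (hstat : k + c * (1 / (bM - ⟪a, p⟫_ℝ) - 1 / (⟪a, p⟫_ℝ - bm)) = 0) :
    1 / 2 * ‖x - p‖ ^ 2 + c * slabLogBarrier bm bM ⟪a, p⟫_ℝ + 1 / 2 * ‖u - p‖ ^ 2 ≤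
      1 / 2 * ‖x - u‖ ^ 2 + c * slabLogBarrier bm bM ⟪a, u⟫_ℝ := by
  have hsplit : ‖x - u‖ ^ 2 = ‖x - p‖ ^ 2 + 2 * ⟪p - x, u - p⟫_ℝ + ‖u - p‖ ^ 2 := by
    rw [show x - u = (x - p) - (u - p) by abel, norm_sub_sq_real,
      show p - x = -(x - p) by abel, inner_neg_left]
    ring
  have hinner : ⟪p - x, u - p⟫_ℝ = k * (⟪a, u⟫_ℝ - ⟪a, p⟫_ℝ) := by
    rw [hpx, real_inner_smul_left, inner_sub_right]
  have htangent := mul_le_mul_of_nonneg_left (slabLogBarrier_add_mul_deriv_le hp hu) hc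
  rw [hsplit, hinner]
  linear_combination htangent - (⟪a, u⟫_ℝ - ⟪a, p⟫_ℝ) * hstat

end InnerProductSpace

section Hyperslab

variable {n : ℕ} {a x u : EuclideanSpace ℝ (Fin n)} {bm bM γ μ : ℝ}

theorem hyperslabProxObj_of_mem (hu : ⟪a, u⟫_ℝ ∈ Set.Ioo bm bM) :
    hyperslabProxObj a bm bM γ μ x u =
      ((1 / 2 * ‖x - u‖ ^ 2 + γ * μ * slabLogBarrier bm bM ⟪a, u⟫_ℝ : ℝ) : EReal) := by
  rw [hyperslabProxObj, hyperslabBarrier, if_pos (Set.mem_Ioo.1 hu), ← EReal.coe_mul,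
    ← EReal.coe_add]
  rfl

theorem hyperslabProxObj_of_not_mem (hγμ : 0 < γ * μ) (hu : ⟪a, u⟫_ℝ ∉ Set.Ioo bm bM) :
    hyperslabProxObj a bm bM γ μ x u = ⊤ := by
  rw [hyperslabProxObj, hyperslabBarrier, if_neg (fun h => hu (Set.mem_Ioo.2 h)),
    EReal.coe_mul_top_of_pos hγμ, EReal.coe_add_top]

end Hyperslab

theorem hyperslab_barrier_prox_general {n : ℕ} (a : EuclideanSpace ℝ (Fin n)) (ha : a ≠ 0)
    (bm bM : ℝ) (γ μ : ℝ) (hγ : 0 < γ) (hμ : 0 < μ)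
    (κ : EuclideanSpace ℝ (Fin n) → ℝ)
    (hκ : ∀ x : EuclideanSpace ℝ (Fin n), κ x ∈ Set.Ioo bm bM ∧
      (κ x) ^ 3 - (bm + bM + ⟪a, x⟫_ℝ) * (κ x) ^ 2 +
        (bm * bM + ⟪a, x⟫_ℝ * (bm + bM) - 2 * γ * μ * ‖a‖ ^ 2) * (κ x) -
        bm * bM * ⟪a, x⟫_ℝ + γ * μ * (bm + bM) * ‖a‖ ^ 2 = 0) :
    ∀ x u : EuclideanSpace ℝ (Fin n),
      u ≠ x + ((κ x - ⟪a, x⟫_ℝ) / ‖a‖ ^ 2) • a →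
      hyperslabProxObj a bm bM γ μ x (x + ((κ x - ⟪a, x⟫_ℝ) / ‖a‖ ^ 2) • a)
        < hyperslabProxObj a bm bM γ μ x u := by
  intro x u hu
  set p := x + ((κ x - ⟪a, x⟫_ℝ) / ‖a‖ ^ 2) • a
  obtain ⟨hκ_mem, hcubic⟩ := hκ x
  have hap : ⟪a, p⟫_ℝ = κ x := inner_add_smul_div_norm_sq ha x (κ x)
  have hγμ : 0 < γ * μ := mul_pos hγ hμ
  rw [hyperslabProxObj_of_mem (hap ▸ hκ_mem)]
  by_cases hu_mem : ⟪a, u⟫_ℝ ∈ Set.Ioo bm bM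
  · rw [hyperslabProxObj_of_mem hu_mem, EReal.coe_lt_coe_iff]
    have hstat := cubic_root_stationary (pow_ne_zero 2 (norm_ne_zero_iff.2 ha)) hκ_mem hcubic
    have hgrowth := half_norm_sub_sq_add_slabLogBarrier_ge hγμ.le (add_sub_cancel_left x _)
      (hap ▸ hκ_mem) hu_mem (by rwa [hap])
    have hdist : 0 < ‖u - p‖ ^ 2 := pow_pos (norm_pos_iff.2 (sub_ne_zero.2 hu)) 2
    linarith
  · rw [hyperslabProxObj_of_not_mem hγμ hu_mem]
    exact EReal.coe_lt_top _

theorem hyperslab_barrier_prox {n : ℕ} (a : EuclideanSpace ℝ (Fin n)) (ha : a ≠ 0)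
    (bm bM : ℝ) (hb : bm < bM) (γ μ : ℝ) (hγ : 0 < γ) (hμ : 0 < μ)
    (κ : EuclideanSpace ℝ (Fin n) → ℝ)
    (hκ : ∀ x : EuclideanSpace ℝ (Fin n), κ x ∈ Set.Ioo bm bM ∧
      (κ x) ^ 3 - (bm + bM + ⟪a, x⟫_ℝ) * (κ x) ^ 2 +
        (bm * bM + ⟪a, x⟫_ℝ * (bm + bM) - 2 * γ * μ * ‖a‖ ^ 2) * (κ x) -
        bm * bM * ⟪a, x⟫_ℝ + γ * μ * (bm + bM) * ‖a‖ ^ 2 = 0) :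
    ∀ x u : EuclideanSpace ℝ (Fin n),
      u ≠ x + ((κ x - ⟪a, x⟫_ℝ) / ‖a‖ ^ 2) • a →
      hyperslabProxObj a bm bM γ μ x (x + ((κ x - ⟪a, x⟫_ℝ) / ‖a‖ ^ 2) • a)
        < hyperslabProxObj a bm bM γ μ x u :=
  hyperslab_barrier_prox_general a ha bm bM γ μ hγ hμ κ hκ
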